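/- Let X₁,…,X_k be i.i.d. square-integrable real random variables, conditionally i.i.d. given a σ-algebra G with common conditional distribution equal to that of X given G. Then the Monte-Carlo estimator X̄ = (1/k)∑ᵢ Xᵢ satisfies Var(X̄) = (1/k)·Var(X) + ((k−1)/k)·Var(E[X|G]). -/

import Mathlib

/-!
Expand `Var(∑ Xᵢ)` as the sum of all `k²` covariances. The `k` diagonal terms equal `Var X`,
since `Xᵢ` and `X` have the same first two conditional moments, hence the same first two moments.
By the tower property each of the `k(k-1)` off-diagonal terms is `E[E[X|G]²] - E[E[X|G]]²`,
i.e. `Var E[X|G]`, because distinct samples are conditionally uncorrelated with conditional mean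
`E[X|G]`. Dividing by `k²` gives the formula.
-/

open MeasureTheory ProbabilityTheory

section CondExpMoments

variable {Ω : Type*} {m m₀ : MeasurableSpace Ω} {μ : Measure Ω}

lemma integral_eq_of_condExp_ae_eq (hm : m ≤ m₀) [SigmaFinite (μ.trim hm)] {f g : Ω → ℝ}
    (h : μ[f | m] =ᵐ[μ] μ[g | m]) : ∫ ω, f ω ∂μ = ∫ ω, g ω ∂μ := by
  rw [← integral_condExp hm, integral_congr_ae h, integral_condExp hm]

variable [IsProbabilityMeasure μ] {X Y Z : Ω → ℝ}

lemma variance_eq_of_condExp_moments_ae_eq (hm : m ≤ m₀) (hX : MemLp X 2 μ) (hY : MemLp Y 2 μ)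
    (hmean : μ[Y | m] =ᵐ[μ] μ[X | m])
    (hsecond : μ[fun ω => Y ω ^ 2 | m] =ᵐ[μ] μ[fun ω => X ω ^ 2 | m]) :
    Var[Y; μ] = Var[X; μ] := by
  rw [variance_eq_sub hY, variance_eq_sub hX]
  simp only [Pi.pow_apply]
  rw [integral_eq_of_condExp_ae_eq hm hmean, integral_eq_of_condExp_ae_eq hm hsecond]

/-- The law of total covariance when the conditional covariance vanishes. -/
lemma covariance_eq_variance_condExp (hm : m ≤ m₀) (hX : MemLp X 2 μ) (hY : MemLp Y 2 μ)
    (hZ : MemLp Z 2 μ) (hYX : μ[Y | m] =ᵐ[μ] μ[X | m]) (hZX : μ[Z | m] =ᵐ[μ] μ[X | m])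
    (hYZ : μ[fun ω => Y ω * Z ω | m] =ᵐ[μ] fun ω => (μ[X | m]) ω * (μ[X | m]) ω) :
    cov[Y, Z; μ] = Var[μ[X | m]; μ] := by
  have hmeanY : ∫ ω, Y ω ∂μ = ∫ ω, (μ[X | m]) ω ∂μ := by
    rw [integral_eq_of_condExp_ae_eq hm hYX, integral_condExp hm]
  have hmeanZ : ∫ ω, Z ω ∂μ = ∫ ω, (μ[X | m]) ω ∂μ := by
    rw [integral_eq_of_condExp_ae_eq hm hZX, integral_condExp hm]
  have hprod : ∫ ω, Y ω * Z ω ∂μ = ∫ ω, (μ[X | m]) ω * (μ[X | m]) ω ∂μ := by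
    rw [← integral_condExp hm, integral_congr_ae hYZ]
  rw [covariance_eq_sub hY hZ, variance_eq_sub (hX.condExp one_le_two)]
  simp only [Pi.mul_apply, Pi.pow_apply, sq]
  rw [hprod, hmeanY, hmeanZ]

end CondExpMoments

lemma variance_fun_sum_of_covariance_eq {Ω ι : Type*} {mΩ : MeasurableSpace Ω} {μ : Measure Ω}
    [IsFiniteMeasure μ] [Fintype ι] {X : ι → Ω → ℝ} (hX : ∀ i, MemLp (X i) 2 μ) {v c : ℝ}
    (hdiag : ∀ i, Var[X i; μ] = v) (hoff : ∀ i j, i ≠ j → cov[X i, X j; μ] = c) :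
    Var[fun ω => ∑ i, X i ω; μ] =
      Fintype.card ι * v + Fintype.card ι * (Fintype.card ι - 1) * c := by
  classical
  have hrow : ∀ i, ∑ j, cov[X i, X j; μ] = v + (Fintype.card ι - 1) * c := by
    intro i
    rw [Fintype.sum_eq_add_sum_compl i, covariance_self (hX i).aemeasurable, hdiag i,
      Finset.sum_congr rfl fun j hj => hoff i j (Ne.symm (by simpa using hj)), Finset.sum_const,
      Finset.card_compl, Finset.card_singleton, nsmul_eq_mul,
      Nat.cast_pred (Fintype.card_pos_iff.mpr ⟨i⟩)]
  rw [variance_fun_sum hX, Finset.sum_congr rfl fun i _ => hrow i]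
  simp only [Finset.sum_const, Finset.card_univ, nsmul_eq_mul]
  ring

theorem variance_monteCarlo_condExp_general {Ω : Type*} {F : MeasurableSpace Ω}
    (μ : Measure Ω) [IsProbabilityMeasure μ]
    (m : MeasurableSpace Ω) (hm : m ≤ F)
    (X : Ω → ℝ) (hX : MemLp X 2 μ)
    (k : ℕ)
    (Xs : Fin k → Ω → ℝ) (hXs : ∀ i, MemLp (Xs i) 2 μ)
    -- common conditional law given `m` : equal conditional first moments,
    (hmean : ∀ i, μ[Xs i | m] =ᵐ[μ] μ[X | m])
    -- equal conditional second moments,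
    (hsecond : ∀ i, μ[fun ω => (Xs i ω) ^ 2 | m] =ᵐ[μ] μ[fun ω => (X ω) ^ 2 | m])
    -- and conditional (pairwise) independence given `m`.
    (hindep : ∀ i j, i ≠ j →
      μ[fun ω => Xs i ω * Xs j ω | m] =ᵐ[μ] fun ω => (μ[X | m]) ω * (μ[X | m]) ω) :
    variance (fun ω => (1 / (k : ℝ)) * ∑ i, Xs i ω) μ =
      (1 / (k : ℝ)) * variance X μ
        + (((k : ℝ) - 1) / (k : ℝ)) * variance (μ[X | m]) μ := by
  have hsum := variance_fun_sum_of_covariance_eq hXs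
    (fun i => variance_eq_of_condExp_moments_ae_eq hm hX (hXs i) (hmean i) (hsecond i))
    (fun i j hij => covariance_eq_variance_condExp hm hX (hXs i) (hXs j) (hmean i) (hmean j)
      (hindep i j hij))
  rw [variance_const_mul, hsum, Fintype.card_fin]
  have hscale : (1 / (k : ℝ)) ^ 2 * k = 1 / k := by
    rw [one_div, inv_pow, ← div_eq_inv_mul, sq, div_self_mul_self']
  linear_combination (Var[X; μ] + (k - 1) * Var[μ[X | m]; μ]) * hscale

/-- Variance of the `k`-sample Monte-Carlo estimator of a conditional expectation:
for `X₁,…,X_k` conditionally i.i.d. given `m` with common conditional law equal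
to that of `X` given `m` (expressed through equality of conditional first and
second moments and conditional pairwise independence of products),
`Var((1/k)∑ᵢ Xᵢ) = (1/k)·Var(X) + ((k−1)/k)·Var(E[X|m])`. -/
theorem variance_monteCarlo_condExp {Ω : Type*} {F : MeasurableSpace Ω}
    (μ : Measure Ω) [IsProbabilityMeasure μ]
    (m : MeasurableSpace Ω) (hm : m ≤ F)
    (X : Ω → ℝ) (hX : MemLp X 2 μ)
    (k : ℕ) (hk : 0 < k)
    (Xs : Fin k → Ω → ℝ) (hXs : ∀ i, MemLp (Xs i) 2 μ)
    -- common conditional law given `m` : equal conditional first moments,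
    (hmean : ∀ i, μ[Xs i | m] =ᵐ[μ] μ[X | m])
    -- equal conditional second moments,
    (hsecond : ∀ i, μ[fun ω => (Xs i ω) ^ 2 | m] =ᵐ[μ] μ[fun ω => (X ω) ^ 2 | m])
    -- and conditional (pairwise) independence given `m`.
    (hindep : ∀ i j, i ≠ j →
      μ[fun ω => Xs i ω * Xs j ω | m] =ᵐ[μ] fun ω => (μ[X | m]) ω * (μ[X | m]) ω) :
    variance (fun ω => (1 / (k : ℝ)) * ∑ i, Xs i ω) μ =
      (1 / (k : ℝ)) * variance X μ
        + (((k : ℝ) - 1) / (k : ℝ)) * variance (μ[X | m]) μ :=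
  variance_monteCarlo_condExp_general μ m hm X hX k Xs hXs hmean hsecond hindep
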